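/- Let Γ be a finite lower Eulerian poset with rank function ρ_Γ and let q be a join-admissible element of Γ with q ≠ 0̂_Γ. Set X = Γ ∖ {z ∈ Γ : q ≤ z} and Y = {z ∈ Γ : q ≤ z}, equipped with the rank functions obtained by restricting ρ_Γ to X and restricting ρ_Γ − 1 to Y. Then X and Y are lower Eulerian posets, and the map σ̂ : X → Y defined by σ̂(x) = x ∨ q is a strong formal subdivision. -/

import Mathlib

namespace SFSPaper

variable {α β : Type*}

/-- `ρ` is a rank function: it increases by exactly one along covering relations. -/
def IsRankFunction [Preorder α] (ρ : α → ℤ) : Prop :=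
  ∀ ⦃z z' : α⦄, z ⋖ z' → ρ z' = ρ z + 1

/-- `σ` is rank-increasing with respect to the rank functions `ρX` and `ρY`. -/
def RankIncreasing [Preorder α] [Preorder β] (ρX : α → ℤ) (ρY : β → ℤ) (σ : α → β) : Prop :=
  ∀ x : α, ρX x ≤ ρY (σ x)

/-- `σ` is strongly surjective. -/
def StronglySurjective [Preorder α] [Preorder β] (ρX : α → ℤ) (ρY : β → ℤ) (σ : α → β) : Prop :=
  Function.Surjective σ ∧
    ∀ (x : α) (y : β), σ x ≤ y → ∃ x' : α, x ≤ x' ∧ ρX x' = ρY y ∧ σ x' = y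

/-- The alternating sum `∑_{z ≤ w ≤ z'} (-1)^(ρ w)`. -/
noncomputable def intervalEulerSum [Preorder α] (ρ : α → ℤ) (z z' : α) : ℚ :=
  ∑ᶠ (w : α) (_ : z ≤ w ∧ w ≤ z'), (-1 : ℚ) ^ ρ w

/-- A poset is lower Eulerian with respect to `ρ` if `ρ` is a rank function, there is a
unique minimal (i.e. least) element, and every nontrivial interval has as many elements of even
rank as of odd rank. -/
def LowerEulerian [PartialOrder α] (ρ : α → ℤ) : Prop :=
  IsRankFunction ρ ∧ (∃ b : α, ∀ z : α, b ≤ z) ∧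
    ∀ z z' : α, z < z' → intervalEulerSum ρ z z' = 0

/-- Eulerian: lower Eulerian with a unique maximal element. -/
def Eulerian [PartialOrder α] (ρ : α → ℤ) : Prop :=
  LowerEulerian ρ ∧ ∃ t : α, ∀ z : α, z ≤ t

/-- Strong formal subdivision. -/
def StrongFormalSubdivision [PartialOrder α] [PartialOrder β]
    (ρX : α → ℤ) (ρY : β → ℤ) (σ : α → β) : Prop :=
  Monotone σ ∧ RankIncreasing ρX ρY σ ∧ StronglySurjective ρX ρY σ ∧
    ∀ (x : α) (y : β), σ x ≤ y →
      (∑ᶠ (x' : α) (_ : x ≤ x' ∧ σ x' = y), (-1 : ℚ) ^ (ρY y - ρX x')) = 1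

/-- `q` is join-admissible: every `z` has a join with `q`. -/
def JoinAdmissible [Preorder α] (q : α) : Prop :=
  ∀ z : α, ∃ j : α, IsLeast {w : α | z ≤ w ∧ q ≤ w} j

/-- The rank of a poset: the maximal length of a chain `z_0 < z_1 < ⋯ < z_s`. -/
noncomputable def posetRank (α : Type*) [Preorder α] : ℕ :=
  sSup {n : ℕ | ∃ c : Fin (n + 1) → α, StrictMono c}

/-- A poset is graded if all of its maximal chains have the same length (cardinality). -/
def GradedPoset (α : Type*) [Preorder α] : Prop :=
  ∀ s t : Set α, IsMaxChain (· ≤ ·) s → IsMaxChain (· ≤ ·) t → s.ncard = t.ncard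

/-! For `x ∉ Γ_{≥q}` and `y ≥ x ∨ q`, the interval `[x, y]` is the disjoint union of
`[x ∨ q, y]` and, for each `u` in it, of the part of the fibre `σ̂⁻¹(u)` lying above `x`.
Since `[x, y]` has vanishing alternating sum, Möbius inversion over `[x ∨ q, y]` shows that
the alternating sum over `{x' ≥ x | σ̂ x' = y}` is `-(-1)^ρ(y)`, which is the subdivision
identity. In particular that fibre is nonempty, and its maximal elements are covered by `y`,
which gives strong surjectivity. Being a lower and an upper set of `Γ`, `X` and `Y` inherit
the intervals and covering relations of `Γ`, hence are lower Eulerian. -/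

lemma neg_one_zpow_sub (a b : ℤ) : (-1 : ℚ) ^ (a - b) = (-1) ^ a * (-1) ^ b := by
  rw [zpow_sub₀ (by norm_num), div_eq_mul_inv, ← inv_zpow, inv_neg_one]

lemma neg_one_zpow_mul_self (n : ℤ) : (-1 : ℚ) ^ n * (-1) ^ n = 1 := by
  rw [← mul_zpow]; norm_num

section Eulerian

variable [PartialOrder α] {ρ : α → ℤ}

lemma intervalEulerSum_sub_const (c : ℤ) (z z' : α) :
    intervalEulerSum (fun w => ρ w - c) z z' = intervalEulerSum ρ z z' * (-1) ^ c := by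
  change ∑ᶠ w ∈ Set.Icc z z', (-1 : ℚ) ^ (ρ w - c) = (∑ᶠ w ∈ Set.Icc z z', (-1 : ℚ) ^ ρ w) * _
  simp only [neg_one_zpow_sub, finsum_mem_mul]

lemma LowerEulerian.sub_const (h : LowerEulerian ρ) (c : ℤ) :
    LowerEulerian (fun w => ρ w - c) := by
  obtain ⟨hρ, hbot, heuler⟩ := h
  refine ⟨fun z z' hzz' => ?_, hbot, fun z z' hzz' => ?_⟩
  · simp only [hρ hzz']; ring
  · rw [intervalEulerSum_sub_const, heuler z z' hzz', zero_mul]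

variable {p : α → Prop}

lemma IsRankFunction.subtype (hρ : IsRankFunction ρ) (hp : {x | p x}.OrdConnected) :
    IsRankFunction (fun x : {x // p x} => ρ x) := fun z z' hzz' =>
  hρ <| (Set.OrdConnected.apply_covBy_apply_iff (OrderEmbedding.subtype p)
    (by rwa [OrderEmbedding.coe_subtype, Subtype.range_coe_subtype])).2 hzz'

lemma image_subtype_val_Icc_of_ordConnected (hp : {x | p x}.OrdConnected) (z z' : {x // p x}) :
    Subtype.val '' Set.Icc z z' = Set.Icc z.1 z'.1 :=
  (Set.image_subtype_val_Icc_subset z z').antisymm fun w hw =>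
    ⟨⟨w, hp.out z.2 z'.2 hw⟩, hw, rfl⟩

lemma intervalEulerSum_subtype (hp : {x | p x}.OrdConnected) (z z' : {x // p x}) :
    intervalEulerSum (fun x : {x // p x} => ρ x) z z' = intervalEulerSum ρ z z' := by
  change ∑ᶠ w ∈ Set.Icc z z', (-1 : ℚ) ^ ρ w = ∑ᶠ w ∈ Set.Icc z.1 z'.1, (-1 : ℚ) ^ ρ w
  rw [← image_subtype_val_Icc_of_ordConnected hp, finsum_mem_image Subtype.val_injective.injOn]

lemma LowerEulerian.subtype (h : LowerEulerian ρ) (hp : {x | p x}.OrdConnected) {b : α}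
    (hb : p b) (hb_le : ∀ z, p z → b ≤ z) : LowerEulerian (fun x : {x // p x} => ρ x) :=
  ⟨h.1.subtype hp, ⟨⟨b, hb⟩, fun z => hb_le z z.2⟩, fun z z' hzz' => by
    rw [intervalEulerSum_subtype hp]; exact h.2.2 z z' hzz'⟩

variable [LocallyFiniteOrder α]

open Finset in
lemma intervalEulerSum_eq_sum_Icc (z z' : α) :
    intervalEulerSum ρ z z' = ∑ w ∈ Icc z z', (-1 : ℚ) ^ ρ w := by
  rw [← finsum_mem_coe_finset, coe_Icc]; rfl

lemma LowerEulerian.sum_Icc_eq_zero (h : LowerEulerian ρ) {z z' : α} (hzz' : z < z') :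
    ∑ w ∈ Finset.Icc z z', (-1 : ℚ) ^ ρ w = 0 := by
  rw [← intervalEulerSum_eq_sum_Icc]; exact h.2.2 z z' hzz'

end Eulerian

section LocallyFinite

open Finset

variable [PartialOrder α] [LocallyFiniteOrder α]

lemma IsRankFunction.strictMono {ρ : α → ℤ} (hρ : IsRankFunction ρ) : StrictMono ρ := by
  intro a b hab
  induction hn : #(Icc a b) using Nat.strong_induction_on generalizing a with
  | _ n ih =>
  obtain ⟨c, hac, hcb⟩ := exists_covBy_le_of_lt hab
  rcases hcb.eq_or_lt with rfl | hcb
  · rw [hρ hac]; omega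
  · have := ih _ (hn ▸ card_lt_card (Icc_ssubset_Icc_left hab.le hac.lt le_rfl)) hcb rfl
    rw [hρ hac] at this; omega

lemma eq_zero_of_forall_sum_Icc_eq_zero {M : Type*} [AddCommMonoid M] {a : α} {G : α → M}
    (hG : ∀ y, a ≤ y → ∑ u ∈ Icc a y, G u = 0) {y : α} (hy : a ≤ y) : G y = 0 := by
  classical
  induction hn : #(Icc a y) using Nat.strong_induction_on generalizing y with
  | _ n ih =>
  have hlt : ∀ u ∈ Ico a y, G u = 0 := fun u hu =>
    ih _ (hn ▸ card_lt_card (Icc_ssubset_Icc_right hy le_rfl (mem_Ico.1 hu).2))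
      (mem_Ico.1 hu).1 rfl
  have := hG y hy
  rwa [← Ico_insert_right hy, sum_insert right_notMem_Ico, sum_eq_zero hlt, add_zero] at this

end LocallyFinite

/-- `j z = z ∨ q` for every `z`. -/
def IsJoinWith [Preorder α] (q : α) (j : α → α) : Prop :=
  ∀ z, IsLeast {w | z ≤ w ∧ q ≤ w} (j z)

namespace IsJoinWith

variable [PartialOrder α] {q : α} {j : α → α}

lemma le_apply (hj : IsJoinWith q j) (z : α) : z ≤ j z := (hj z).1.1

lemma right_le_apply (hj : IsJoinWith q j) (z : α) : q ≤ j z := (hj z).1.2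

lemma apply_le (hj : IsJoinWith q j) {z w : α} (hzw : z ≤ w) (hqw : q ≤ w) : j z ≤ w :=
  (hj z).2 ⟨hzw, hqw⟩

lemma monotone (hj : IsJoinWith q j) : Monotone j := fun _ _ hzw =>
  hj.apply_le (hzw.trans (hj.le_apply _)) (hj.right_le_apply _)

lemma lt_apply (hj : IsJoinWith q j) {z : α} (hz : ¬ q ≤ z) : z < j z :=
  (hj.le_apply z).lt_of_ne fun h => hz (h ▸ hj.right_le_apply z)

/-- The map `σ̂ : X → Y`, `x ↦ x ∨ q`, where `Y = Γ_{≥q}` and `X` is its complement. -/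
def restrict (hj : IsJoinWith q j) : {z // ¬ q ≤ z} → {z // q ≤ z} :=
  fun x => ⟨j x, hj.right_le_apply x⟩

lemma monotone_restrict (hj : IsJoinWith q j) : Monotone hj.restrict :=
  fun _ _ h => hj.monotone h

lemma covBy_of_maximal (hj : IsJoinWith q j) {w y : α} (hw : ¬ q ≤ w) (hwy : j w = y)
    (hmax : ∀ v, w < v → ¬ q ≤ v → j v ≠ y) : w ⋖ y := by
  refine ⟨hwy ▸ hj.lt_apply hw, fun v hwv hvy => ?_⟩
  have hqy : q ≤ y := hwy ▸ hj.right_le_apply w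
  by_cases hqv : q ≤ v
  · exact (hwy ▸ hj.apply_le hwv.le hqv).not_gt hvy
  · exact hmax v hwv hqv <| (hj.apply_le hvy.le hqy).antisymm (hwy ▸ hj.monotone hwv.le)

section LocallyFinite

open Finset

variable [LocallyFiniteOrder α] [DecidableEq α] [DecidableLE α]

lemma sum_Icc_eq_sum_Icc_apply {M : Type*} [AddCommMonoid M] (hj : IsJoinWith q j) (f : α → M)
    (x : α) {y : α} (hqy : q ≤ y) :
    ∑ w ∈ Icc x y, f w =
      ∑ u ∈ Icc (j x) y, (f u + ∑ w ∈ Icc x u with ¬ q ≤ w ∧ j w = u, f w) := by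
  rw [sum_add_distrib, ← sum_filter_add_sum_filter_not (Icc x y) (q ≤ ·)]
  congr 1
  · refine sum_congr (ext fun w => ?_) fun _ _ => rfl
    simp only [mem_filter, mem_Icc]
    exact ⟨fun ⟨⟨hxw, hwy⟩, hqw⟩ => ⟨hj.apply_le hxw hqw, hwy⟩,
      fun ⟨hjw, hwy⟩ => ⟨⟨(hj.le_apply x).trans hjw, hwy⟩, (hj.right_le_apply x).trans hjw⟩⟩
  · rw [← sum_fiberwise_of_maps_to (g := j) (t := Icc (j x) y) fun w hw => ?_]
    · refine sum_congr rfl fun u hu => sum_congr (ext fun w => ?_) fun _ _ => rfl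
      simp only [mem_filter, mem_Icc] at hu ⊢
      constructor
      · rintro ⟨⟨⟨hxw, -⟩, hqw⟩, rfl⟩
        exact ⟨⟨hxw, hj.le_apply w⟩, hqw, rfl⟩
      · rintro ⟨⟨hxw, hwu⟩, hqw, rfl⟩
        exact ⟨⟨⟨hxw, hwu.trans hu.2⟩, hqw⟩, rfl⟩
    · simp only [mem_filter, mem_Icc] at hw ⊢
      exact ⟨hj.monotone hw.1.1, hj.apply_le hw.1.2 hqy⟩

variable {ρ : α → ℤ}

lemma sum_fiber_neg_one_zpow (hj : IsJoinWith q j) (hΓ : LowerEulerian ρ) {x y : α}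
    (hx : ¬ q ≤ x) (hxy : j x ≤ y) :
    ∑ w ∈ Icc x y with ¬ q ≤ w ∧ j w = y, (-1 : ℚ) ^ ρ w = -(-1) ^ ρ y := by
  have hG := eq_zero_of_forall_sum_Icc_eq_zero
    (G := fun u => (-1 : ℚ) ^ ρ u + ∑ w ∈ Icc x u with ¬ q ≤ w ∧ j w = u, (-1 : ℚ) ^ ρ w)
    (fun u hu => by
      rw [← hj.sum_Icc_eq_sum_Icc_apply _ x ((hj.right_le_apply x).trans hu)]
      exact hΓ.sum_Icc_eq_zero ((hj.lt_apply hx).trans_le hu)) hxy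
  linear_combination hG

lemma finsum_fiber_restrict {M : Type*} [AddCommMonoid M] (hj : IsJoinWith q j) (f : α → M)
    (x : {z // ¬ q ≤ z}) (y : {z // q ≤ z}) :
    ∑ᶠ (x' : {z // ¬ q ≤ z}) (_ : x ≤ x' ∧ hj.restrict x' = y), f x' =
      ∑ w ∈ Icc x.1 y.1 with ¬ q ≤ w ∧ j w = y, f w := by
  change ∑ᶠ x' ∈ {x' | x ≤ x' ∧ hj.restrict x' = y}, f x'.1 = _
  rw [← finsum_mem_image Subtype.val_injective.injOn, ← finsum_mem_coe_finset]
  refine finsum_mem_congr (Set.ext fun w => ?_) fun _ _ => rfl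
  simp only [restrict, Subtype.ext_iff, Set.mem_image, Set.mem_ofPred_eq, coe_filter, mem_Icc]
  constructor
  · rintro ⟨x', ⟨hxx', hjx'⟩, rfl⟩
    exact ⟨⟨hxx', hjx' ▸ hj.le_apply x'⟩, x'.2, hjx'⟩
  · rintro ⟨⟨hxw, -⟩, hqw, hjw⟩
    exact ⟨⟨w, hqw⟩, ⟨hxw, hjw⟩, rfl⟩

end LocallyFinite

variable [LocallyFiniteOrder α] {ρ : α → ℤ}

lemma exists_covBy_of_apply_le (hj : IsJoinWith q j) (hΓ : LowerEulerian ρ) {x y : α}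
    (hx : ¬ q ≤ x) (hxy : j x ≤ y) : ∃ x', x ≤ x' ∧ ¬ q ≤ x' ∧ j x' = y ∧ x' ⋖ y := by
  classical
  have hS : ({w ∈ Finset.Icc x y | ¬ q ≤ w ∧ j w = y} : Finset α).Nonempty := by
    refine Finset.nonempty_of_sum_ne_zero (f := fun w => (-1 : ℚ) ^ ρ w) ?_
    rw [hj.sum_fiber_neg_one_zpow hΓ hx hxy, neg_ne_zero]
    exact zpow_ne_zero _ (by norm_num)
  obtain ⟨x', hx'⟩ := Finset.exists_maximal hS
  obtain ⟨⟨hxx', -⟩, hqx', hjx'⟩ : (x ≤ x' ∧ x' ≤ y) ∧ ¬ q ≤ x' ∧ j x' = y := by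
    simpa using hx'.prop
  refine ⟨x', hxx', hqx', hjx', hj.covBy_of_maximal hqx' hjx' fun v hv hqv hjv => ?_⟩
  refine hx'.not_gt ?_ hv
  simp only [Finset.mem_filter, Finset.mem_Icc]
  exact ⟨⟨hxx'.trans hv.le, hjv ▸ hj.le_apply v⟩, hqv, hjv⟩

lemma rankIncreasing_restrict (hj : IsJoinWith q j) (hρ : IsRankFunction ρ) :
    RankIncreasing (fun x : {z // ¬ q ≤ z} => ρ x) (fun y : {z // q ≤ z} => ρ y - 1)
      hj.restrict := fun x => by
  have := hρ.strictMono (hj.lt_apply x.2)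
  simp only [restrict]
  omega

lemma stronglySurjective_restrict (hj : IsJoinWith q j) (hΓ : LowerEulerian ρ) {b : α}
    (hb : ∀ z, b ≤ z) (hqb : ¬ q ≤ b) :
    StronglySurjective (fun x : {z // ¬ q ≤ z} => ρ x) (fun y : {z // q ≤ z} => ρ y - 1)
      hj.restrict := by
  classical
  have hfiber : ∀ (x : {z // ¬ q ≤ z}) (y : {z // q ≤ z}), hj.restrict x ≤ y →
      ∃ x', x ≤ x' ∧ ρ x' = ρ y - 1 ∧ hj.restrict x' = y := fun x y hxy => by
    obtain ⟨x', hxx', hqx', hjx', hx'y⟩ := hj.exists_covBy_of_apply_le hΓ x.2 hxy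
    exact ⟨⟨x', hqx'⟩, hxx', by rw [hΓ.1 hx'y]; ring, Subtype.ext hjx'⟩
  refine ⟨fun y => ?_, hfiber⟩
  obtain ⟨x, -, -, hx⟩ := hfiber ⟨b, hqb⟩ y (hj.apply_le (hb y) y.2)
  exact ⟨x, hx⟩

lemma finsum_fiber_restrict_neg_one_zpow (hj : IsJoinWith q j) (hΓ : LowerEulerian ρ)
    (x : {z // ¬ q ≤ z}) (y : {z // q ≤ z}) (hxy : hj.restrict x ≤ y) :
    ∑ᶠ (x' : {z // ¬ q ≤ z}) (_ : x ≤ x' ∧ hj.restrict x' = y), (-1 : ℚ) ^ (ρ y - 1 - ρ x') =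
      1 := by
  classical
  rw [hj.finsum_fiber_restrict (fun w => (-1 : ℚ) ^ (ρ y - 1 - ρ w))]
  simp only [neg_one_zpow_sub, ← Finset.mul_sum, hj.sum_fiber_neg_one_zpow hΓ x.2 hxy, zpow_one]
  linear_combination neg_one_zpow_mul_self (ρ y)

theorem strongFormalSubdivision_restrict (hj : IsJoinWith q j) (hΓ : LowerEulerian ρ) {b : α}
    (hb : ∀ z, b ≤ z) (hqb : ¬ q ≤ b) :
    StrongFormalSubdivision (fun x : {z // ¬ q ≤ z} => ρ x) (fun y : {z // q ≤ z} => ρ y - 1)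
      hj.restrict :=
  ⟨hj.monotone_restrict, hj.rankIncreasing_restrict hΓ.1,
    hj.stronglySurjective_restrict hΓ hb hqb, hj.finsum_fiber_restrict_neg_one_zpow hΓ⟩

end IsJoinWith

/-- Let `Γ` be a finite lower Eulerian poset, `q ≠ 0̂_Γ` join-admissible
(with join function `jn`). Then `X = Γ ∖ Γ_{≥q}` and `Y = Γ_{≥q}` are lower Eulerian for
the restricted rank functions `ρ_Γ` and `ρ_Γ - 1` respectively, and `σ̂ : X → Y`,
`σ̂(x) = x ∨ q`, is a strong formal subdivision. -/
theorem joinMap_strongFormalSubdivision {Γ : Type*} [PartialOrder Γ] [Finite Γ]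
    (ρ : Γ → ℤ) (hΓ : LowerEulerian ρ)
    (b : Γ) (hb : ∀ z : Γ, b ≤ z) (q : Γ) (hq : q ≠ b)
    (jn : Γ → Γ) (hjn : ∀ z : Γ, IsLeast {w : Γ | z ≤ w ∧ q ≤ w} (jn z)) :
    LowerEulerian (fun x : {z : Γ // ¬ q ≤ z} => ρ x.1) ∧
    LowerEulerian (fun y : {z : Γ // q ≤ z} => ρ y.1 - 1) ∧
    StrongFormalSubdivision (fun x : {z : Γ // ¬ q ≤ z} => ρ x.1)
      (fun y : {z : Γ // q ≤ z} => ρ y.1 - 1)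
      (fun x : {z : Γ // ¬ q ≤ z} => (⟨jn x.1, (hjn x.1).1.2⟩ : {z : Γ // q ≤ z})) := by
  classical
  cases nonempty_fintype Γ
  let := Fintype.toLocallyFiniteOrder (α := Γ)
  have hqb : ¬ q ≤ b := fun h => hq (h.antisymm (hb q))
  exact ⟨hΓ.subtype (isUpperSet_Ici q).compl.ordConnected hqb fun z _ => hb z,
    (hΓ.subtype (isUpperSet_Ici q).ordConnected le_rfl fun _ h => h).sub_const 1,
    IsJoinWith.strongFormalSubdivision_restrict hjn hΓ hb hqb⟩

end SFSPaper
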